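/- Let φ : ℝ³ → ℝ be a smooth function of (t,x,y) satisfying the 2D incompressible Euler vorticity equation Δφ_t + φ_x·Δφ_y − φ_y·Δφ_x = 0, where Δ = ∂_x² + ∂_y², and let f : ℝ → ℝ be any smooth function. Then q(t,x,y) = x·f(t) satisfies the adjoint-symmetry determining equation along φ: ∂_t Δq + ∂_y Δ(φ_x·q) + ∂_x(Δφ_y·q) − ∂_x Δ(φ_y·q) − ∂_y(Δφ_x·q) = 0 holds identically. -/

import Mathlib

/-- partial derivative in t (first variable) -/
noncomputable def pt (f : ℝ × ℝ × ℝ → ℝ) : ℝ × ℝ × ℝ → ℝ :=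
  fun p => deriv (fun s => f (s, p.2.1, p.2.2)) p.1

/-- partial derivative in x (second variable) -/
noncomputable def px (f : ℝ × ℝ × ℝ → ℝ) : ℝ × ℝ × ℝ → ℝ :=
  fun p => deriv (fun s => f (p.1, s, p.2.2)) p.2.1

/-- partial derivative in y (third variable) -/
noncomputable def py (f : ℝ × ℝ × ℝ → ℝ) : ℝ × ℝ × ℝ → ℝ :=
  fun p => deriv (fun s => f (p.1, p.2.1, s)) p.2.2

/-- spatial Laplacian Δ = ∂_x² + ∂_y² -/
noncomputable def lap (f : ℝ × ℝ × ℝ → ℝ) : ℝ × ℝ × ℝ → ℝ :=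
  fun p => px (px f) p + py (py f) p

/-- the 2D vorticity equation Δφ_t + φ_x·Δφ_y − φ_y·Δφ_x = 0 -/
def VorticityEq (φ : ℝ × ℝ × ℝ → ℝ) : Prop :=
  ∀ p : ℝ × ℝ × ℝ,
    pt (lap φ) p + px φ p * py (lap φ) p - py φ p * px (lap φ) p = 0

/-- the adjoint-symmetry determining equation along φ:
∂_t Δq + ∂_y Δ(φ_x·q) + ∂_x(Δφ_y·q) − ∂_x Δ(φ_y·q) − ∂_y(Δφ_x·q) = 0 -/
def AdjointSymmetryEq (φ q : ℝ × ℝ × ℝ → ℝ) : Prop :=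
  ∀ p : ℝ × ℝ × ℝ,
    pt (lap q) p
      + py (lap (fun r => px φ r * q r)) p
      + px (fun r => py (lap φ) r * q r) p
      - px (lap (fun r => py φ r * q r)) p
      - py (fun r => px (lap φ) r * q r) p = 0

namespace AdjAux

variable {g h : ℝ × ℝ × ℝ → ℝ}

lemma curvex (p : ℝ × ℝ × ℝ) :
    HasDerivAt (fun s : ℝ => ((p.1, s, p.2.2) : ℝ × ℝ × ℝ)) ((0,1,0) : ℝ × ℝ × ℝ) p.2.1 := by
  have := (hasDerivAt_const p.2.1 p.1).prodMk
    ((hasDerivAt_id p.2.1).prodMk (hasDerivAt_const p.2.1 p.2.2))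
  simpa using this

lemma curvey (p : ℝ × ℝ × ℝ) :
    HasDerivAt (fun s : ℝ => ((p.1, p.2.1, s) : ℝ × ℝ × ℝ)) ((0,0,1) : ℝ × ℝ × ℝ) p.2.2 := by
  have := (hasDerivAt_const p.2.2 p.1).prodMk
    ((hasDerivAt_const p.2.2 p.2.1).prodMk (hasDerivAt_id p.2.2))
  simpa using this

lemma px_eq (hg : ContDiff ℝ (⊤ : ℕ∞) g) :
    px g = fun p => fderiv ℝ g p ((0,1,0) : ℝ × ℝ × ℝ) := by
  funext p
  have h1 := ((hg.differentiable (by simp)) (p.1, p.2.1, p.2.2)).hasFDerivAt.comp_hasDerivAt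
    p.2.1 (curvex p)
  simpa [px, Function.comp_def] using h1.deriv

lemma py_eq (hg : ContDiff ℝ (⊤ : ℕ∞) g) :
    py g = fun p => fderiv ℝ g p ((0,0,1) : ℝ × ℝ × ℝ) := by
  funext p
  have h1 := ((hg.differentiable (by simp)) (p.1, p.2.1, p.2.2)).hasFDerivAt.comp_hasDerivAt
    p.2.2 (curvey p)
  simpa [py, Function.comp_def] using h1.deriv

lemma px_smooth (hg : ContDiff ℝ (⊤ : ℕ∞) g) : ContDiff ℝ (⊤ : ℕ∞) (px g) := by
  rw [px_eq hg]; exact (hg.fderiv_right (by simp)).clm_apply contDiff_const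

lemma py_smooth (hg : ContDiff ℝ (⊤ : ℕ∞) g) : ContDiff ℝ (⊤ : ℕ∞) (py g) := by
  rw [py_eq hg]; exact (hg.fderiv_right (by simp)).clm_apply contDiff_const

lemma fderiv_fderiv_apply (hg : ContDiff ℝ (⊤ : ℕ∞) g) (p v w : ℝ × ℝ × ℝ) :
    fderiv ℝ (fun y => fderiv ℝ g y v) p w = fderiv ℝ (fderiv ℝ g) p w v := by
  have hc : DifferentiableAt ℝ (fderiv ℝ g) p :=
    ((hg.fderiv_right (m := (⊤ : ℕ∞)) (by simp)).differentiable (by simp)) p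
  have := fderiv_clm_apply (c := fderiv ℝ g) (u := fun _ => v) hc (differentiableAt_const v)
  simp only [fderiv_fun_const] at this
  rw [this]
  simp

lemma pxy_comm (hg : ContDiff ℝ (⊤ : ℕ∞) g) : px (py g) = py (px g) := by
  rw [py_eq hg, px_eq hg,
    px_eq ((hg.fderiv_right (by simp)).clm_apply contDiff_const),
    py_eq ((hg.fderiv_right (by simp)).clm_apply contDiff_const)]
  funext p
  rw [fderiv_fderiv_apply hg, fderiv_fderiv_apply hg]
  exact ((hg.contDiffAt (x := p)).isSymmSndFDerivAt (by rw [minSmoothness_of_isRCLikeNormedField]; exact WithTop.coe_le_coe.mpr (le_top : (2 : ℕ∞) ≤ ⊤)) _ _).symm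

lemma diff_slicex (hg : ContDiff ℝ (⊤ : ℕ∞) g) (t y : ℝ) :
    Differentiable ℝ (fun s => g (t, s, y)) :=
  (hg.comp (contDiff_const.prodMk (contDiff_id.prodMk contDiff_const))).differentiable (by simp)

lemma diff_slicey (hg : ContDiff ℝ (⊤ : ℕ∞) g) (t x : ℝ) :
    Differentiable ℝ (fun s => g (t, x, s)) :=
  (hg.comp (contDiff_const.prodMk (contDiff_const.prodMk contDiff_id))).differentiable (by simp)

lemma px_mul (hg : ContDiff ℝ (⊤ : ℕ∞) g) (hh : ContDiff ℝ (⊤ : ℕ∞) h) :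
    px (fun r => g r * h r) = fun p => px g p * h p + g p * px h p := by
  funext p
  exact deriv_mul (diff_slicex hg p.1 p.2.2 p.2.1) (diff_slicex hh p.1 p.2.2 p.2.1)

lemma py_mul (hg : ContDiff ℝ (⊤ : ℕ∞) g) (hh : ContDiff ℝ (⊤ : ℕ∞) h) :
    py (fun r => g r * h r) = fun p => py g p * h p + g p * py h p := by
  funext p
  exact deriv_mul (diff_slicey hg p.1 p.2.1 p.2.2) (diff_slicey hh p.1 p.2.1 p.2.2)

lemma px_add (hg : ContDiff ℝ (⊤ : ℕ∞) g) (hh : ContDiff ℝ (⊤ : ℕ∞) h) :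
    px (fun r => g r + h r) = fun p => px g p + px h p := by
  funext p
  exact deriv_add (diff_slicex hg p.1 p.2.2 p.2.1) (diff_slicex hh p.1 p.2.2 p.2.1)

lemma py_add (hg : ContDiff ℝ (⊤ : ℕ∞) g) (hh : ContDiff ℝ (⊤ : ℕ∞) h) :
    py (fun r => g r + h r) = fun p => py g p + py h p := by
  funext p
  exact deriv_add (diff_slicey hg p.1 p.2.1 p.2.2) (diff_slicey hh p.1 p.2.1 p.2.2)

variable (f : ℝ → ℝ)

lemma px_F : px (fun r : ℝ × ℝ × ℝ => f r.1) = fun _ => 0 := by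
  funext p; simp [px]

lemma py_F : py (fun r : ℝ × ℝ × ℝ => f r.1) = fun _ => 0 := by
  funext p; simp [py]

lemma px_Q : px (fun r : ℝ × ℝ × ℝ => r.2.1 * f r.1) = fun p => f p.1 := by
  funext p
  have := ((hasDerivAt_id p.2.1).mul_const (f p.1)).deriv
  simpa [px] using this

lemma py_Q : py (fun r : ℝ × ℝ × ℝ => r.2.1 * f r.1) = fun _ => 0 := by
  funext p; simp [py]

lemma pt_zero : pt (fun _ : ℝ × ℝ × ℝ => (0:ℝ)) = fun _ => 0 := by
  funext p; simp [pt]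

lemma py_zero : py (fun _ : ℝ × ℝ × ℝ => (0:ℝ)) = fun _ => 0 := by
  funext p; simp [py]

/-- Laplacian of g·q where q = x f(t). -/
lemma lap_mul_Q (hf : ContDiff ℝ (⊤ : ℕ∞) f) (hg : ContDiff ℝ (⊤ : ℕ∞) g) :
    lap (fun r => g r * (r.2.1 * f r.1)) =
      fun p => lap g p * (p.2.1 * f p.1) + px g p * (2 * f p.1) := by
  have hQ : ContDiff ℝ (⊤ : ℕ∞) (fun r : ℝ × ℝ × ℝ => r.2.1 * f r.1) :=
    (contDiff_fst.comp contDiff_snd).mul (hf.comp contDiff_fst)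
  have hF : ContDiff ℝ (⊤ : ℕ∞) (fun r : ℝ × ℝ × ℝ => f r.1) := hf.comp contDiff_fst
  have e1 : px (fun r => g r * (r.2.1 * f r.1))
      = fun p => px g p * (p.2.1 * f p.1) + g p * f p.1 := by
    simp only [px_mul hg hQ, px_Q f]
  have e1y : py (fun r => g r * (r.2.1 * f r.1))
      = fun p => py g p * (p.2.1 * f p.1) := by
    simp only [py_mul hg hQ, py_Q f]
    funext p; simp
  have e2 : px (px (fun r => g r * (r.2.1 * f r.1)))
      = fun p => px (px g) p * (p.2.1 * f p.1) + px g p * (2 * f p.1) := by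
    rw [e1]
    simp only [px_add ((px_smooth hg).mul hQ) (hg.mul hF),
      px_mul (px_smooth hg) hQ, px_mul hg hF, px_Q f, px_F f]
    funext p; ring
  have e2y : py (py (fun r => g r * (r.2.1 * f r.1)))
      = fun p => py (py g) p * (p.2.1 * f p.1) := by
    rw [e1y]
    simp only [py_mul (py_smooth hg) hQ, py_Q f]
    funext p; simp
  funext p
  show px (px (fun r => g r * (r.2.1 * f r.1))) p
      + py (py (fun r => g r * (r.2.1 * f r.1))) p = _
  rw [e2, e2y]
  show px (px g) p * (p.2.1 * f p.1) + px g p * (2 * f p.1)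
      + py (py g) p * (p.2.1 * f p.1)
      = (px (px g) p + py (py g) p) * (p.2.1 * f p.1) + px g p * (2 * f p.1)
  ring

end AdjAux

open AdjAux in
/-- q = x·f(t) is an adjoint-symmetry of the 2D vorticity equation. -/
theorem vorticity_adjoint_symmetry_x_f_t
    (φ : ℝ × ℝ × ℝ → ℝ) (hφ : ContDiff ℝ (⊤ : ℕ∞) φ) (hvort : VorticityEq φ)
    (f : ℝ → ℝ) (hf : ContDiff ℝ (⊤ : ℕ∞) f) :
    AdjointSymmetryEq φ (fun p => p.2.1 * f p.1) := by
  have hQ : ContDiff ℝ (⊤ : ℕ∞) (fun r : ℝ × ℝ × ℝ => r.2.1 * f r.1) :=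
    (contDiff_fst.comp contDiff_snd).mul (hf.comp contDiff_fst)
  have hF : ContDiff ℝ (⊤ : ℕ∞) (fun r : ℝ × ℝ × ℝ => f r.1) := hf.comp contDiff_fst
  have ha : ContDiff ℝ (⊤ : ℕ∞) (px φ) := px_smooth hφ
  have hb : ContDiff ℝ (⊤ : ℕ∞) (py φ) := py_smooth hφ
  have hlapa : ContDiff ℝ (⊤ : ℕ∞) (lap (px φ)) :=
    (px_smooth (px_smooth ha)).add (py_smooth (py_smooth ha))
  have hlapb : ContDiff ℝ (⊤ : ℕ∞) (lap (py φ)) :=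
    (px_smooth (px_smooth hb)).add (py_smooth (py_smooth hb))
  have c1 : px (py φ) = py (px φ) := pxy_comm hφ
  -- ∂x commutes with the Laplacian
  have c2 : px (lap φ) = lap (px φ) := by
    show px (fun p => px (px φ) p + py (py φ) p) = _
    rw [px_add (px_smooth ha) (py_smooth hb)]
    have e : px (py (py φ)) = py (py (px φ)) := by
      rw [pxy_comm hb, c1]
    rw [e]
    rfl
  -- ∂y commutes with the Laplacian
  have c3 : py (lap φ) = lap (py φ) := by
    show py (fun p => px (px φ) p + py (py φ) p) = _
    rw [py_add (px_smooth ha) (py_smooth hb)]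
    have e : py (px (px φ)) = px (px (py φ)) := by
      rw [← pxy_comm ha, ← c1]
    rw [e]
    rfl
  have c4 : py (px (px φ)) = px (px (py φ)) := by
    rw [← pxy_comm ha, ← c1]
  -- term 1 : Δq = 0 hence ∂t Δq = 0
  have t1 : pt (lap (fun r : ℝ × ℝ × ℝ => r.2.1 * f r.1)) = fun _ => 0 := by
    have e : lap (fun r : ℝ × ℝ × ℝ => r.2.1 * f r.1) = fun _ => 0 := by
      show (fun p => px (px (fun r : ℝ × ℝ × ℝ => r.2.1 * f r.1)) p
        + py (py (fun r : ℝ × ℝ × ℝ => r.2.1 * f r.1)) p) = _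
      rw [px_Q f, px_F f, py_Q f, py_zero]
      funext p; simp
    rw [e, pt_zero]
  -- term 2
  have t2 : py (lap (fun r => px φ r * (r.2.1 * f r.1)))
      = fun p => py (lap (px φ)) p * (p.2.1 * f p.1)
        + py (px (px φ)) p * (2 * f p.1) := by
    rw [lap_mul_Q f hf ha]
    have h2F : ContDiff ℝ (⊤ : ℕ∞) (fun r : ℝ × ℝ × ℝ => 2 * f r.1) := contDiff_const.mul hF
    have hy2F : py (fun r : ℝ × ℝ × ℝ => 2 * f r.1) = fun _ => 0 := py_F (fun t => 2 * f t)
    simp only [py_add (hlapa.mul hQ) ((px_smooth ha).mul h2F),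
      py_mul hlapa hQ, py_mul (px_smooth ha) h2F, py_Q f, hy2F]
    funext p; ring
  -- term 5
  have t5 : py (fun r => px (lap φ) r * (r.2.1 * f r.1))
      = fun p => py (lap (px φ)) p * (p.2.1 * f p.1) := by
    rw [c2]
    simp only [py_mul hlapa hQ, py_Q f]
    funext p; ring
  -- term 3
  have t3 : px (fun r => py (lap φ) r * (r.2.1 * f r.1))
      = fun p => px (lap (py φ)) p * (p.2.1 * f p.1) + lap (py φ) p * f p.1 := by
    rw [c3]
    simp only [px_mul hlapb hQ, px_Q f]
  -- term 4
  have t4 : px (lap (fun r => py φ r * (r.2.1 * f r.1)))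
      = fun p => px (lap (py φ)) p * (p.2.1 * f p.1) + lap (py φ) p * f p.1
        + px (px (py φ)) p * (2 * f p.1) := by
    rw [lap_mul_Q f hf hb]
    have h2F : ContDiff ℝ (⊤ : ℕ∞) (fun r : ℝ × ℝ × ℝ => 2 * f r.1) := contDiff_const.mul hF
    have hx2F : px (fun r : ℝ × ℝ × ℝ => 2 * f r.1) = fun _ => 0 := px_F (fun t => 2 * f t)
    simp only [px_add (hlapb.mul hQ) ((px_smooth hb).mul h2F),
      px_mul hlapb hQ, px_mul (px_smooth hb) h2F, px_Q f, hx2F]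
    funext p; ring
  intro p
  simp only [t1, t2, t3, t4, t5, c4]
  ring
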